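/- arXiv:2411.01181 — 2 statements merged into one kernel-verified Lean document; each statement's English description precedes it below -/
import Mathlib

section
/- Let λ̲, α, k₁ > 0 with α ≤ 1 and k₁ ≥ 1, and let z_s, z_u : ℝ × ℝ → ℝ satisfy z_s(t,s) ≤ k₁ exp(−(λ̲/2)(t−s)) for t ≥ s and z_u(s,t) ≤ k₁ exp(−(λ̲/2)(t−s)) for t ≥ s, together with the cocycle identities. Then for every θ ≥ 0, τ ∈ ℝ and M ≥ θ: ∫₀^θ z_s(θ+τ, s+τ) · (z_s(s+τ, τ))^α · z_u(s+τ, M+τ) ds ≤ (2 k₁^{2+α} / λ̲) · z_u(θ+τ, M+τ). -/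
/-!
The factor `z_u(s+τ, M+τ)` is split by the cocycle identity at `θ+τ`. The decays of
`z_s(θ+τ, s+τ)` and of `z_u(s+τ, θ+τ)`, each at rate `λ̲/2`, then combine into
`exp (-λ̲ (θ - s))`, while `z_s(s+τ, τ)^α` is bounded by `k₁^α`. Integrating the
exponential over `[0, θ]` contributes at most `1/λ̲`.
-/

open Real MeasureTheory Set

lemma integral_exp_neg_mul_sub_le_inv {lam : ℝ} (hlam : 0 < lam) (θ : ℝ) :
    ∫ s in (0:ℝ)..θ, exp (-lam * (θ - s)) ≤ lam⁻¹ := by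
  have hsub := intervalIntegral.integral_comp_sub_left (fun x => exp (-lam * x)) θ
    (a := 0) (b := θ)
  simp only [sub_self, sub_zero] at hsub
  rw [hsub, intervalIntegral.integral_comp_mul_left (fun x => exp x) (neg_ne_zero.2 hlam.ne'),
    integral_exp, mul_zero, exp_zero, smul_eq_mul, inv_neg, neg_mul, ← mul_neg, neg_sub]
  exact mul_le_of_le_one_right (inv_nonneg.2 hlam.le) (sub_le_self _ (exp_pos _).le)

lemma intervalIntegral_le_of_le_exp_decay {f : ℝ → ℝ} {lam K θ : ℝ} (hlam : 0 < lam)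
    (hθ : 0 ≤ θ) (hf : ∀ s ∈ Icc 0 θ, 0 ≤ f s)
    (hfK : ∀ s ∈ Icc 0 θ, f s ≤ K * exp (-lam * (θ - s))) :
    ∫ s in (0:ℝ)..θ, f s ≤ K / lam := by
  have hK : 0 ≤ K := by
    simpa using (hf θ ⟨hθ, le_rfl⟩).trans (hfK θ ⟨hθ, le_rfl⟩)
  have hIoc {p : ℝ → Prop} (hp : ∀ s ∈ Icc 0 θ, p s) :
      ∀ᵐ s ∂volume.restrict (Ioc 0 θ), p s :=
    ae_restrict_of_forall_mem measurableSet_Ioc fun s hs => hp s (Ioc_subset_Icc_self hs)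
  calc ∫ s in (0:ℝ)..θ, f s ≤ ∫ s in (0:ℝ)..θ, K * exp (-lam * (θ - s)) := by
        rw [intervalIntegral.integral_of_le hθ, intervalIntegral.integral_of_le hθ]
        exact integral_mono_of_nonneg (hIoc hf)
          ((by fun_prop : Continuous fun s => K * exp (-lam * (θ - s))).integrableOn_Ioc)
          (hIoc hfK)
    _ = K * ∫ s in (0:ℝ)..θ, exp (-lam * (θ - s)) := intervalIntegral.integral_const_mul _ _
    _ ≤ K / lam := mul_le_mul_of_nonneg_left (integral_exp_neg_mul_sub_le_inv hlam θ) hK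

section Dichotomy

variable {lam α k₁ : ℝ} {zs zu : ℝ → ℝ → ℝ}

lemma le_of_exp_decay (hlam : 0 ≤ lam) (hk₁ : 0 ≤ k₁)
    (hdec : ∀ t s : ℝ, s ≤ t → zs t s ≤ k₁ * exp (-(lam / 2) * (t - s))) {t s : ℝ}
    (hst : s ≤ t) : zs t s ≤ k₁ :=
  (hdec t s hst).trans <| mul_le_of_le_one_right hk₁ <|
    exp_le_one_iff.2 (by nlinarith)

lemma dichotomy_product_le (hlam : 0 ≤ lam) (hα : 0 ≤ α) (hk₁ : 0 ≤ k₁)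
    (hs_nonneg : ∀ t s : ℝ, 0 ≤ zs t s) (hu_nonneg : ∀ t s : ℝ, 0 ≤ zu t s)
    (hcoc_u : ∀ t r s : ℝ, zu t s = zu t r * zu r s)
    (hdec_s : ∀ t s : ℝ, s ≤ t → zs t s ≤ k₁ * exp (-(lam / 2) * (t - s)))
    (hdec_u : ∀ t s : ℝ, s ≤ t → zu s t ≤ k₁ * exp (-(lam / 2) * (t - s)))
    {r s t : ℝ} (hrs : r ≤ s) (hst : s ≤ t) (m : ℝ) :
    zs t s * zs s r ^ α * zu s m ≤ k₁ ^ ((2:ℝ) + α) * zu t m * exp (-lam * (t - s)) := by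
  set e := exp (-(lam / 2) * (t - s))
  have hpow : zs s r ^ α ≤ k₁ ^ α :=
    rpow_le_rpow (hs_nonneg s r) (le_of_exp_decay hlam hk₁ hdec_s hrs) hα
  have hu : zu s m ≤ k₁ * e * zu t m := by
    rw [hcoc_u s t m]
    exact mul_le_mul_of_nonneg_right (hdec_u t s hst) (hu_nonneg t m)
  have he : e * e = exp (-lam * (t - s)) := by
    rw [← exp_add]
    ring_nf
  calc zs t s * zs s r ^ α * zu s m ≤ k₁ * e * k₁ ^ α * (k₁ * e * zu t m) := by
        have hke : 0 ≤ k₁ * e := mul_nonneg hk₁ (exp_pos _).le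
        exact mul_le_mul (mul_le_mul (hdec_s t s hst) hpow (rpow_nonneg (hs_nonneg s r) α) hke)
          hu (hu_nonneg s m) (mul_nonneg hke (rpow_nonneg hk₁ α))
    _ = k₁ ^ ((2:ℝ) + α) * zu t m * (e * e) := by
        rw [rpow_add' hk₁ (by positivity), rpow_two]
        ring
    _ = k₁ ^ ((2:ℝ) + α) * zu t m * exp (-lam * (t - s)) := by rw [he]

end Dichotomy

theorem stmt_2_general
    (lam α k₁ : ℝ) (zs zu : ℝ → ℝ → ℝ)
    (hlam : 0 < lam) (hα : 0 < α) (hk₁ : 1 ≤ k₁)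
    (hpos_s : ∀ t s : ℝ, 0 < zs t s) (hpos_u : ∀ t s : ℝ, 0 < zu t s)
    (hcoc_u : ∀ t r s : ℝ, zu t s = zu t r * zu r s)
    (hdec_s : ∀ t s : ℝ, s ≤ t → zs t s ≤ k₁ * exp (-(lam / 2) * (t - s)))
    (hdec_u : ∀ t s : ℝ, s ≤ t → zu s t ≤ k₁ * exp (-(lam / 2) * (t - s))) :
    ∀ (θ τ M : ℝ), 0 ≤ θ → θ ≤ M →
      (∫ s in (0:ℝ)..θ, zs (θ + τ) (s + τ) * (zs (s + τ) τ) ^ α * zu (s + τ) (M + τ))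
        ≤ (2 * k₁ ^ ((2:ℝ) + α) / lam) * zu (θ + τ) (M + τ) := by
  intro θ τ M hθ _
  have hs_nonneg t s := (hpos_s t s).le
  have hu_nonneg t s := (hpos_u t s).le
  have hk₁' : 0 ≤ k₁ := zero_le_one.trans hk₁
  set C := zu (θ + τ) (M + τ)
  have hK : 0 ≤ k₁ ^ ((2:ℝ) + α) * C / lam :=
    div_nonneg (mul_nonneg (rpow_nonneg hk₁' _) (hu_nonneg _ _)) hlam.le
  calc _ ≤ k₁ ^ ((2:ℝ) + α) * C / lam := by
        refine intervalIntegral_le_of_le_exp_decay hlam hθ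
          (fun s _ => mul_nonneg (mul_nonneg (hs_nonneg _ _) (rpow_nonneg (hs_nonneg _ _) α))
            (hu_nonneg _ _)) fun s ⟨hs0, hsθ⟩ => ?_
        simpa only [add_sub_add_right_eq_sub] using
          dichotomy_product_le hlam.le hα.le hk₁' hs_nonneg hu_nonneg hcoc_u
            hdec_s hdec_u (r := τ) (s := s + τ) (t := θ + τ) (by linarith) (by linarith)
            (M + τ)
    _ ≤ 2 * (k₁ ^ ((2:ℝ) + α) * C / lam) := le_mul_of_one_le_left hK one_le_two
    _ = 2 * k₁ ^ ((2:ℝ) + α) / lam * C := by ring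

/-- First integral estimate in the proof of Lemma 5.7 (L-S-Lin-). -/
theorem stmt_2
    (lam α k₁ : ℝ) (zs zu : ℝ → ℝ → ℝ)
    (hlam : 0 < lam) (hα : 0 < α) (hα1 : α ≤ 1) (hk₁ : 1 ≤ k₁)
    (hpos_s : ∀ t s : ℝ, 0 < zs t s) (hpos_u : ∀ t s : ℝ, 0 < zu t s)
    (hcoc_s : ∀ t r s : ℝ, zs t s = zs t r * zs r s)
    (hcoc_u : ∀ t r s : ℝ, zu t s = zu t r * zu r s)
    (hdec_s : ∀ t s : ℝ, s ≤ t → zs t s ≤ k₁ * exp (-(lam / 2) * (t - s)))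
    (hdec_u : ∀ t s : ℝ, s ≤ t → zu s t ≤ k₁ * exp (-(lam / 2) * (t - s))) :
    ∀ (θ τ M : ℝ), 0 ≤ θ → θ ≤ M →
      (∫ s in (0:ℝ)..θ, zs (θ + τ) (s + τ) * (zs (s + τ) τ) ^ α * zu (s + τ) (M + τ))
        ≤ (2 * k₁ ^ ((2:ℝ) + α) / lam) * zu (θ + τ) (M + τ) :=
  stmt_2_general lam α k₁ zs zu hlam hα hk₁ hpos_s hpos_u hcoc_u hdec_s hdec_u
end

section
/- Let λ̲ > 0, 0 < α ≤ 1, k₁ ≥ 1, and let z_s, z_u satisfy the cocycle identities and the decay bounds z_s(t,s) ≤ k₁ exp(−(λ̲/2)(t−s)) for t ≥ s and z_u(s,t) ≤ k₁ exp(−(λ̲/2)(t−s)) for t ≥ s. Then for every θ ≥ 0, τ ∈ ℝ and M ≥ θ: ∫₀^θ z_s(θ+τ, s+τ) · (z_u(s+τ, M+τ))^{1+α} ds ≤ (2 k₁^{2+2α} / (λ̲(2+α))) · z_u(θ+τ, M+τ). -/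
open Real

/-!
Split `z_u(s+τ, M+τ) = z_u(s+τ, θ+τ) · z_u(θ+τ, M+τ)` by the cocycle identity. The first factor
and `z_s(θ+τ, s+τ)` decay like `k₁ e^{-(λ̲/2)(θ-s)}`, while `z_u(θ+τ, M+τ) ≤ k₁` because `θ ≤ M`.
Keeping one power of `z_u(θ+τ, M+τ)` and bounding its remaining `α`-th power by `k₁^α`, the integrand
is at most `k₁^{2+2α} z_u(θ+τ, M+τ) e^{-(λ̲/2)(2+α)(θ-s)}`, whose integral over `[0, θ]` is at most
`k₁^{2+2α} z_u(θ+τ, M+τ) / ((λ̲/2)(2+α))`.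
-/

theorem integral_exp_neg_mul_sub {c : ℝ} (hc : c ≠ 0) (θ : ℝ) :
    ∫ s in (0:ℝ)..θ, exp (-c * (θ - s)) = (1 - exp (-c * θ)) / c := by
  have hshift := intervalIntegral.integral_comp_sub_left (fun u ↦ exp (-c * u)) (a := 0) (b := θ) θ
  simp only [sub_self, sub_zero] at hshift
  rw [hshift, intervalIntegral.integral_comp_mul_left (fun u ↦ exp u) (neg_ne_zero.mpr hc),
    integral_exp, mul_zero, exp_zero, smul_eq_mul]
  field_simp
  ring

theorem intervalIntegral_le_of_le_exp_neg_mul_sub {f : ℝ → ℝ} {K c θ : ℝ} (hK : 0 ≤ K)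
    (hc : 0 < c) (hθ : 0 ≤ θ) (hf : ∀ s ∈ Set.Icc 0 θ, f s ≤ K * exp (-c * (θ - s))) :
    ∫ s in (0:ℝ)..θ, f s ≤ K / c := by
  by_cases hint : IntervalIntegrable f MeasureTheory.volume 0 θ
  · calc ∫ s in (0:ℝ)..θ, f s ≤ ∫ s in (0:ℝ)..θ, K * exp (-c * (θ - s)) :=
          intervalIntegral.integral_mono_on hθ hint
            (Continuous.intervalIntegrable (by fun_prop) _ _) hf
      _ = K * ((1 - exp (-c * θ)) / c) := by
          rw [intervalIntegral.integral_const_mul, integral_exp_neg_mul_sub hc.ne']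
      _ ≤ K / c := by
          rw [← mul_div_assoc]
          gcongr
          exact mul_le_of_le_one_right hK (by linarith [exp_pos (-c * θ)])
  · rw [intervalIntegral.integral_undef hint]
    positivity

theorem mul_mul_rpow_le {a b C k x α : ℝ} (hα : 0 ≤ α) (hb : 0 ≤ b) (hC : 0 < C) (hCk : C ≤ k)
    (hx : 0 < x) (ha : a ≤ k * x) (hbk : b ≤ k * x) :
    a * (b * C) ^ (1 + α) ≤ k ^ (2 + 2 * α) * x ^ (2 + α) * C := by
  have hk : 0 < k := hC.trans_le hCk
  have hbC : (b * C) ^ (1 + α) ≤ (k * x) ^ (1 + α) * (C * k ^ α) := by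
    rw [mul_rpow hb hC.le, rpow_add hC, rpow_one]
    gcongr
  have hk_pow : k ^ (2 + 2 * α) = k * k ^ (1 + α) * k ^ α := by
    rw [show 2 + 2 * α = 1 + (1 + α) + α by ring, rpow_add hk, rpow_add hk 1, rpow_one]
  have hx_pow : x ^ (2 + α) = x * x ^ (1 + α) := by
    rw [show 2 + α = 1 + (1 + α) by ring, rpow_add hx 1, rpow_one]
  calc a * (b * C) ^ (1 + α) ≤ k * x * ((k * x) ^ (1 + α) * (C * k ^ α)) := by gcongr
    _ = k ^ (2 + 2 * α) * x ^ (2 + α) * C := by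
        rw [mul_rpow hk.le hx.le, hk_pow, hx_pow]
        ring

theorem stmt_3_general
    (lam α k₁ : ℝ) (zs zu : ℝ → ℝ → ℝ)
    (hlam : 0 < lam) (hα : 0 < α)
    (hpos_u : ∀ t s : ℝ, 0 < zu t s)
    (hcoc_u : ∀ t r s : ℝ, zu t s = zu t r * zu r s)
    (hdec_s : ∀ t s : ℝ, s ≤ t → zs t s ≤ k₁ * exp (-(lam / 2) * (t - s)))
    (hdec_u : ∀ t s : ℝ, s ≤ t → zu s t ≤ k₁ * exp (-(lam / 2) * (t - s))) :
    ∀ (θ τ M : ℝ), 0 ≤ θ → θ ≤ M →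
      (∫ s in (0:ℝ)..θ, zs (θ + τ) (s + τ) * (zu (s + τ) (M + τ)) ^ ((1:ℝ) + α))
        ≤ (2 * k₁ ^ ((2:ℝ) + 2 * α) / (lam * (2 + α))) * zu (θ + τ) (M + τ) := by
  intro θ τ M hθ hM
  have hk₁ : 0 < k₁ := (hpos_u 0 0).trans_le (by simpa using hdec_u 0 0 le_rfl)
  have hCk : zu (θ + τ) (M + τ) ≤ k₁ := (hdec_u _ _ (by linarith)).trans
    (mul_le_of_le_one_right hk₁.le (exp_le_one_iff.mpr (by nlinarith)))
  have hc : 0 < lam / 2 * (2 + α) := by positivity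
  have hpointwise : ∀ s ∈ Set.Icc 0 θ,
      zs (θ + τ) (s + τ) * zu (s + τ) (M + τ) ^ ((1:ℝ) + α)
        ≤ k₁ ^ ((2:ℝ) + 2 * α) * zu (θ + τ) (M + τ) * exp (-(lam / 2 * (2 + α)) * (θ - s)) := by
    rintro s ⟨-, hsθ⟩
    have hdist : θ + τ - (s + τ) = θ - s := by ring
    have hs := hdec_s (θ + τ) (s + τ) (by linarith)
    have hu := hdec_u (θ + τ) (s + τ) (by linarith)
    rw [hdist] at hs hu
    rw [hcoc_u _ (θ + τ)]
    refine (mul_mul_rpow_le hα.le (hpos_u _ _).le (hpos_u _ _) hCk (exp_pos _) hs hu).trans_eq ?_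
    rw [← exp_mul, mul_right_comm]
    congr 2
    ring
  refine (intervalIntegral_le_of_le_exp_neg_mul_sub
    (mul_pos (rpow_pos_of_pos hk₁ _) (hpos_u _ _)).le hc hθ hpointwise).trans_eq ?_
  field_simp

/-- Second integral estimate in the proof of Lemma 5.7 (L-S-Lin-). -/
theorem stmt_3
    (lam α k₁ : ℝ) (zs zu : ℝ → ℝ → ℝ)
    (hlam : 0 < lam) (hα : 0 < α) (hα1 : α ≤ 1) (hk₁ : 1 ≤ k₁)
    (hpos_s : ∀ t s : ℝ, 0 < zs t s) (hpos_u : ∀ t s : ℝ, 0 < zu t s)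
    (hcoc_s : ∀ t r s : ℝ, zs t s = zs t r * zs r s)
    (hcoc_u : ∀ t r s : ℝ, zu t s = zu t r * zu r s)
    (hdec_s : ∀ t s : ℝ, s ≤ t → zs t s ≤ k₁ * exp (-(lam / 2) * (t - s)))
    (hdec_u : ∀ t s : ℝ, s ≤ t → zu s t ≤ k₁ * exp (-(lam / 2) * (t - s))) :
    ∀ (θ τ M : ℝ), 0 ≤ θ → θ ≤ M →
      (∫ s in (0:ℝ)..θ, zs (θ + τ) (s + τ) * (zu (s + τ) (M + τ)) ^ ((1:ℝ) + α))
        ≤ (2 * k₁ ^ ((2:ℝ) + 2 * α) / (lam * (2 + α))) * zu (θ + τ) (M + τ) :=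
  stmt_3_general lam α k₁ zs zu hlam hα hpos_u hcoc_u hdec_s hdec_u
end
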